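/- Let Q_n be the para-chain square cactus of order n: n squares (4-cycles) in a chain where consecutive squares share exactly one vertex, and the two shared vertices in each internal square are diametrically opposite. Then Mo(Q_{2k}) = 24k² and Mo(Q_{2k+1}) = 24k² + 24k for all k ≥ 1. -/

import Mathlib

open Finset

section MostarDefs

variable {V : Type*}

/-- Number of vertices of `G` strictly closer to `u` than to `v`. -/
noncomputable def closerCount (G : SimpleGraph V) (u v : V) : ℕ :=
  Nat.card {w : V // G.dist w u < G.dist w v}

/-- Contribution `|n_u - n_v|` of an edge, as a symmetric function on `Sym2 V`. -/
noncomputable def mostarTerm (G : SimpleGraph V) : Sym2 V → ℕ :=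
  Sym2.lift ⟨fun u v => ((closerCount G u v : ℤ) - closerCount G v u).natAbs,
    fun u v => by dsimp only; omega⟩

/-- The Mostar index of a finite graph. -/
noncomputable def mostar (G : SimpleGraph V) [Finite V] : ℕ :=
  letI := Fintype.ofFinite V
  letI := Classical.decEq V
  letI := Classical.decRel G.Adj
  ∑ e ∈ G.edgeFinset, mostarTerm G e

/-- Distance from a vertex `w` to an edge, as min over the endpoints. -/
noncomputable def vertexEdgeDist (G : SimpleGraph V) (w : V) : Sym2 V → ℕ :=
  Sym2.lift ⟨fun x y => min (G.dist x w) (G.dist y w), fun _ _ => min_comm _ _⟩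

/-- Number of edges of `G` strictly closer to `u` than to `v`. -/
noncomputable def edgeCloserCount (G : SimpleGraph V) (u v : V) : ℕ :=
  Nat.card {e : Sym2 V // e ∈ G.edgeSet ∧ vertexEdgeDist G u e < vertexEdgeDist G v e}

/-- Contribution `|m_u - m_v|` of an edge, as a symmetric function on `Sym2 V`. -/
noncomputable def emostarTerm (G : SimpleGraph V) : Sym2 V → ℕ :=
  Sym2.lift ⟨fun u v => ((edgeCloserCount G u v : ℤ) - edgeCloserCount G v u).natAbs,
    fun u v => by dsimp only; omega⟩

/-- The edge Mostar index of a finite graph. -/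
noncomputable def emostar (G : SimpleGraph V) [Finite V] : ℕ :=
  letI := Fintype.ofFinite V
  letI := Classical.decEq V
  letI := Classical.decRel G.Adj
  ∑ e ∈ G.edgeFinset, emostarTerm G e

end MostarDefs

/-- Global index of the `p`-th vertex of the `i`-th cycle in a chain of `n` cycles of
length `c`, where consecutive cycles share one vertex: position `0` of cycle `i` is the
entry cut vertex (identified with position `d` of cycle `i-1`). -/
def chainPos (c d i p : ℕ) : ℕ :=
  if p = 0 then (if i = 0 then 0 else (i - 1) * (c - 1) + d) else i * (c - 1) + p

/-- The chain cactus consisting of `n` cycles of length `c` in a chain, where consecutive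
cycles share exactly one vertex, and the two cut vertices of each internal cycle are at
positions `0` and `d` (hence at distance `min d (c - d)` in the cycle). -/
def cactusChain (n c d : ℕ) : SimpleGraph (Fin (n * (c - 1) + 1)) where
  Adj u v := u ≠ v ∧ ∃ i p q, i < n ∧ p < c ∧ q < c ∧
    ((p + 1) % c = q ∨ (q + 1) % c = p) ∧
    u.val = chainPos c d i p ∧ v.val = chainPos c d i q
  symm := ⟨by
    rintro u v ⟨hne, i, p, q, hi, hp, hq, hpq, hu, hv⟩
    exact ⟨hne.symm, i, q, p, hi, hq, hp, hpq.symm, hv, hu⟩⟩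
  loopless := ⟨fun u h => h.1 rfl⟩

/-
Measured by distance from the end vertex `0`, the vertices of `Q_n` fall into layers of sizes
`1, 2, 1, 2, …, 2, 1`, and two vertices are adjacent exactly when they lie in consecutive
layers. In such a layered graph the distance between two vertices is the difference of their
levels, or `2` within a layer, and by parity no vertex is equidistant from the ends of an edge.
So for an edge `uv` from layer `ℓ` to layer `ℓ + 1`, `n_u` is the number of vertices below
layer `ℓ` plus the size of layer `ℓ + 1`, and `n_v = |V| - n_u`. For the four edges of the
`i`-th square this gives `|n_u - n_v| = 3 |2i + 1 - n|`, so
`Mo(Q_n) = 12 ∑_{i<n} |2i + 1 - n| = 12 ⌊n² / 2⌋`.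
-/

lemma mostar_eq_sum {V : Type*} [Fintype V] (G : SimpleGraph V) [Fintype G.edgeSet] :
    mostar G = ∑ e ∈ G.edgeFinset, mostarTerm G e :=
  sum_congr (by ext; simp) fun _ _ => rfl

namespace SimpleGraph

variable {V : Type*} (G : SimpleGraph V) (f : V → ℕ)

structure IsLayering : Prop where
  adj_iff : ∀ u v, G.Adj u v ↔ f u + 1 = f v ∨ f v + 1 = f u
  exists_pred : ∀ v, 0 < f v → ∃ w, f w + 1 = f v

variable {G f}

namespace IsLayering

lemma level_le_add_length (hf : G.IsLayering f) {u v : V} (p : G.Walk u v) :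
    f v ≤ f u + p.length := by
  induction p with
  | nil => simp
  | cons h _ ih => have := (hf.adj_iff _ _).1 h; simp only [Walk.length_cons]; omega

lemma exists_walk_length_eq (hf : G.IsLayering f) {u v : V} (h : f u < f v) :
    ∃ p : G.Walk u v, p.length = f v - f u := by
  induction hd : f v - f u generalizing v with
  | zero => omega
  | succ d ih =>
    rcases Nat.eq_zero_or_pos d with rfl | hd0
    · exact ⟨.cons ((hf.adj_iff u v).2 (Or.inl (by omega))) .nil, rfl⟩
    obtain ⟨w, hw⟩ := hf.exists_pred v (by omega)
    obtain ⟨p, hp⟩ := ih (v := w) (by omega) (by omega)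
    exact ⟨p.concat ((hf.adj_iff w v).2 (Or.inl hw)), by simp [hp]⟩

lemma adj_iff_adj_of_level_eq (hf : G.IsLayering f) {w x : V} (h : f w = f x) (y : V) :
    G.Adj w y ↔ G.Adj x y := by
  rw [hf.adj_iff, hf.adj_iff, h]

lemma dist_of_lt (hf : G.IsLayering f) {u v : V} (h : f u < f v) : G.dist u v = f v - f u := by
  obtain ⟨p, hp⟩ := hf.exists_walk_length_eq h
  obtain ⟨q, hq⟩ := p.reachable.exists_walk_length_eq_dist
  have := hf.level_le_add_length q
  have := dist_le p
  omega

lemma dist_of_lt' (hf : G.IsLayering f) {u v : V} (h : f u < f v) : G.dist v u = f v - f u := by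
  rw [dist_comm, hf.dist_of_lt h]

lemma dist_of_level_eq (hf : G.IsLayering f) {w x y : V} (hwx : w ≠ x) (h : f w = f x)
    (hxy : G.Adj x y) : G.dist w x = 2 := by
  have hyx : G.Adj y x := hxy.symm
  have hwy : G.Adj w y := (hf.adj_iff_adj_of_level_eq h y).2 hxy
  have hle : G.dist w x ≤ 2 := dist_le (.cons hwy (.cons hyx .nil))
  have h1 : G.dist w x ≠ 1 := fun h1 => by
    have := (hf.adj_iff w x).1 (dist_eq_one_iff_adj.1 h1); omega
  have h0 : G.dist w x ≠ 0 := fun h0 =>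
    hwx ((Walk.cons hwy (.cons hyx .nil)).reachable.dist_eq_zero_iff.1 h0)
  omega

lemma dist_lt_dist_iff (hf : G.IsLayering f) {u v : V} (huv : f u + 1 = f v) (w : V) :
    G.dist w u < G.dist w v ↔ f w < f u ∨ w = u ∨ (f w = f v ∧ w ≠ v) := by
  have hadj : G.Adj u v := (hf.adj_iff u v).2 (Or.inl huv)
  by_cases hwu : w = u
  · subst hwu
    rw [dist_self, hf.dist_of_lt (by omega)]
    exact iff_of_true (by omega) (Or.inr (Or.inl rfl))
  by_cases hwv : w = v
  · subst hwv
    simp only [hwu, dist_self, ne_eq, not_true_eq_false, and_false, or_false]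
    omega
  simp only [hwu, hwv, false_or, ne_eq, not_false_eq_true, and_true]
  rcases lt_trichotomy (f w) (f u) with h | h | h
  · rw [hf.dist_of_lt h, hf.dist_of_lt (show f w < f v by omega)]; omega
  · rw [hf.dist_of_level_eq hwu h hadj, hf.dist_of_lt (show f w < f v by omega)]; omega
  rcases lt_trichotomy (f w) (f v) with h' | h' | h'
  · omega
  · rw [hf.dist_of_level_eq hwv h' hadj.symm, hf.dist_of_lt' h]; omega
  · rw [hf.dist_of_lt' h, hf.dist_of_lt' h']; omega

lemma length_add_mod_two (hf : G.IsLayering f) {u v : V} (p : G.Walk u v) :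
    (p.length + f u + f v) % 2 = 0 := by
  induction p with
  | nil => simp only [Walk.length_nil]; omega
  | cons h _ ih => have := (hf.adj_iff _ _).1 h; rw [Walk.length_cons]; omega

lemma reachable_of_adj (hf : G.IsLayering f) {u v : V} (hadj : G.Adj u v) (w : V) :
    G.Reachable w u := by
  rcases lt_trichotomy (f w) (f u) with h | h | h
  · exact (hf.exists_walk_length_eq h).elim fun p _ => p.reachable
  · exact ((hf.adj_iff_adj_of_level_eq h v).2 hadj).reachable.trans hadj.symm.reachable
  · exact (hf.exists_walk_length_eq h).elim fun p _ => p.reachable.symm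

lemma dist_ne_dist (hf : G.IsLayering f) {u v : V} (hadj : G.Adj u v) (w : V) :
    G.dist w u ≠ G.dist w v := by
  obtain ⟨p, hp⟩ := (hf.reachable_of_adj hadj w).exists_walk_length_eq_dist
  obtain ⟨q, hq⟩ := (hf.reachable_of_adj hadj.symm w).exists_walk_length_eq_dist
  have hp2 := hf.length_add_mod_two p
  have hq2 := hf.length_add_mod_two q
  have := (hf.adj_iff u v).1 hadj
  omega

variable [Fintype V]

lemma closerCount_add_closerCount (hf : G.IsLayering f) {u v : V} (hadj : G.Adj u v) :
    closerCount G u v + closerCount G v u = Fintype.card V := by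
  simp only [closerCount, Nat.card_eq_fintype_card, Fintype.card_subtype]
  rw [← card_univ,
    ← card_filter_add_card_filter_not (s := univ) fun w => G.dist w u < G.dist w v]
  congr 2
  ext w
  have := hf.dist_ne_dist hadj w
  simp only [mem_filter, mem_univ, true_and]
  omega

lemma closerCount_of_level_succ (hf : G.IsLayering f) {u v : V} (huv : f u + 1 = f v) :
    closerCount G u v = #{w | f w < f u} + #{w | f w = f v} := by
  classical
  have huv' : u ≠ v := by rintro rfl; omega
  have hsplit : (univ.filter fun w => G.dist w u < G.dist w v) =
      insert u ((univ.filter fun w => f w < f u ∨ f w = f v).erase v) := by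
    ext w
    simp only [mem_filter, mem_univ, true_and, mem_insert, mem_erase, hf.dist_lt_dist_iff huv]
    rcases eq_or_ne w v with rfl | hwv
    · simp only [huv'.symm, ne_eq, not_true_eq_false, and_false, false_and, or_false, iff_false,
        not_lt]
      omega
    · simp only [hwv, ne_eq, not_false_eq_true, and_true, true_and]
      tauto
  simp only [closerCount, Nat.card_eq_fintype_card, Fintype.card_subtype]
  rw [hsplit, card_insert_of_notMem (by simp [huv']; omega), card_erase_of_mem (by simp),
    filter_or, card_union_of_disjoint (disjoint_filter.2 fun w _ h => by omega)]
  have : 0 < #{w | f w = f v} := card_pos.2 ⟨v, by simp⟩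
  omega

lemma mostarTerm_of_level_succ (hf : G.IsLayering f) {u v : V} (huv : f u + 1 = f v) :
    mostarTerm G s(u, v) =
      ((2 * (#{w | f w < f u} + #{w | f w = f u + 1}) : ℕ) - (Fintype.card V : ℤ)).natAbs := by
  have hsum := hf.closerCount_add_closerCount ((hf.adj_iff u v).2 (Or.inl huv))
  have hu := hf.closerCount_of_level_succ huv
  show ((closerCount G u v : ℤ) - closerCount G v u).natAbs = _
  rw [huv]
  omega

lemma edgeFinset_eq_image [DecidableEq V] [Fintype G.edgeSet] (hf : G.IsLayering f) :
    G.edgeFinset =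
      ({p : V × V | f p.1 + 1 = f p.2} : Finset (V × V)).image fun p => s(p.1, p.2) := by
  ext ⟨u, v⟩
  simp only [mem_edgeFinset, mem_edgeSet, hf.adj_iff, mem_image, mem_filter, mem_univ, true_and,
    Prod.exists, Sym2.eq_iff]
  constructor
  · rintro (h | h)
    · exact ⟨u, v, h, Or.inl ⟨rfl, rfl⟩⟩
    · exact ⟨v, u, h, Or.inr ⟨rfl, rfl⟩⟩
  · rintro ⟨a, b, h, ⟨rfl, rfl⟩ | ⟨rfl, rfl⟩⟩ <;> omega

lemma mostar_eq (hf : G.IsLayering f) {L : ℕ} (hL : ∀ v, f v < L) :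
    mostar G = ∑ ℓ ∈ range L, #{w | f w = ℓ} * #{w | f w = ℓ + 1} *
      ((2 * (#{w | f w < ℓ} + #{w | f w = ℓ + 1}) : ℕ) - (Fintype.card V : ℤ)).natAbs := by
  classical
  have hinj : Set.InjOn (fun p : V × V => s(p.1, p.2))
      ({p : V × V | f p.1 + 1 = f p.2} : Finset (V × V)) := by
    rintro ⟨a, b⟩ hab ⟨c, d⟩ hcd h
    simp only [coe_filter, mem_univ, true_and, Set.mem_ofPred_eq] at hab hcd
    rcases Sym2.eq_iff.1 h with ⟨rfl, rfl⟩ | ⟨rfl, rfl⟩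
    · rfl
    · simp only at hcd; omega
  have hfiber (ℓ : ℕ) : ({p : V × V | f p.1 + 1 = f p.2 ∧ f p.1 = ℓ} : Finset (V × V)) =
      ({w | f w = ℓ} : Finset V) ×ˢ ({w | f w = ℓ + 1} : Finset V) := by
    ext ⟨a, b⟩; simp only [mem_filter, mem_univ, true_and, mem_product]; omega
  let T (ℓ : ℕ) : ℕ :=
    ((2 * (#{w | f w < ℓ} + #{w | f w = ℓ + 1}) : ℕ) - (Fintype.card V : ℤ)).natAbs
  calc mostar G = ∑ p ∈ ({p : V × V | f p.1 + 1 = f p.2} : Finset (V × V)), T (f p.1) := by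
        rw [mostar_eq_sum, hf.edgeFinset_eq_image, sum_image hinj]
        exact sum_congr rfl fun p hp => hf.mostarTerm_of_level_succ (mem_filter.1 hp).2
    _ = _ := (sum_fiberwise_of_maps_to' (fun p _ => mem_range.2 (hL p.1)) T).symm
    _ = _ := sum_congr rfl fun ℓ _ => by
      rw [filter_filter, sum_const, hfiber, card_product, smul_eq_mul]

end IsLayering
end SimpleGraph

lemma card_filter_lt_add_one {V : Type*} [Fintype V] (f : V → ℕ) (ℓ : ℕ) :
    #{w | f w < ℓ + 1} = #{w | f w < ℓ} + #{w | f w = ℓ} := by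
  classical
  rw [← card_union_of_disjoint (disjoint_filter.2 fun _ _ h => h.ne), ← filter_or]
  congr 1; ext; simp only [mem_filter, mem_univ, true_and]; omega

lemma sum_range_two_mul_comp_div_two (g : ℕ → ℕ) (m : ℕ) :
    ∑ ℓ ∈ range (2 * m), g (ℓ / 2) = 2 * ∑ i ∈ range m, g i := by
  induction m with
  | zero => simp
  | succ m ih =>
    rw [show 2 * (m + 1) = 2 * m + 1 + 1 by ring, sum_range_succ, sum_range_succ, ih,
      sum_range_succ, show (2 * m + 1) / 2 = m by omega, show 2 * m / 2 = m by omega]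
    ring

lemma sum_range_natAbs_two_mul_add_one_sub (n : ℕ) :
    ∑ i ∈ range n, ((2 * i + 1 : ℤ) - n).natAbs = n ^ 2 / 2 := by
  induction n using Nat.twoStepInduction with
  | zero => simp
  | one => simp
  | more n ih _ =>
    rw [sum_range_succ', sum_range_succ]
    have hshift (i : ℕ) : ((2 * (i + 1 : ℕ) + 1 : ℤ) - (n + 2 : ℕ)).natAbs =
        ((2 * i + 1 : ℤ) - n).natAbs := by push_cast; ring_nf
    simp only [hshift, ih]
    ring_nf; omega

-- Vertex `3i + p` (`p = 1, 2, 3`) is position `p` of square `i`; its level is its distance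
-- from vertex `0`.
def squareLevel (x : ℕ) : ℕ :=
  if x = 0 then 0 else 2 * ((x - 1) / 3) + min ((x - 1) % 3 + 1) (3 - (x - 1) % 3)

-- For `i = 0` the truncated `3 * i - 1` is the end vertex `0`.
lemma chainPos_four_two (i p : ℕ) :
    chainPos 4 2 i p = if p = 0 then 3 * i - 1 else 3 * i + p := by
  unfold chainPos; split_ifs <;> omega

lemma squareLevel_chainPos {i p : ℕ} (hp : p < 4) :
    squareLevel (chainPos 4 2 i p) = 2 * i + min p (4 - p) := by
  rw [chainPos_four_two]; unfold squareLevel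
  split_ifs <;> omega

lemma exists_chainPos_of_squareLevel_succ {x y : ℕ} (h : squareLevel x + 1 = squareLevel y) :
    ∃ i p q, p < 4 ∧ q < 4 ∧ ((p + 1) % 4 = q ∨ (q + 1) % 4 = p) ∧
      x = chainPos 4 2 i p ∧ y = chainPos 4 2 i q ∧ 3 * i < y := by
  obtain ⟨i, r, hr, rfl⟩ : ∃ i r, r < 3 ∧ y = 3 * i + r + 1 := by
    refine ⟨(y - 1) / 3, (y - 1) % 3, by omega, ?_⟩
    unfold squareLevel at h; split_ifs at h <;> omega
  have hx : (r = 1 ∧ (x = 3 * i + 1 ∨ x = 3 * i + 3)) ∨ (r ≠ 1 ∧ x = 3 * i - 1) := by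
    unfold squareLevel at h; split_ifs at h <;> omega
  rcases hx with ⟨rfl, rfl | rfl⟩ | ⟨hr1, rfl⟩
  · exact ⟨i, 1, 2, by norm_num [chainPos_four_two]⟩
  · exact ⟨i, 3, 2, by norm_num [chainPos_four_two]⟩
  · exact ⟨i, 0, r + 1, by norm_num [chainPos_four_two]; omega⟩

lemma exists_squareLevel_pred {y : ℕ} (hy : 0 < squareLevel y) :
    ∃ x < y, squareLevel x + 1 = squareLevel y := by
  refine ⟨if y % 3 = 2 then y - 1 else 3 * ((y - 1) / 3) - 1, ?_⟩
  unfold squareLevel at hy ⊢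
  split_ifs at * <;> omega

variable {n : ℕ}

lemma cactusChain_adj_iff {u v : Fin (n * 3 + 1)} :
    (cactusChain n 4 2).Adj u v ↔
      squareLevel u + 1 = squareLevel v ∨ squareLevel v + 1 = squareLevel u := by
  have of_succ {x y : Fin (n * 3 + 1)} (h : squareLevel x + 1 = squareLevel y) :
      (cactusChain n 4 2).Adj x y := by
    obtain ⟨i, p, q, hp, hq, hpq, hx, hy, hi⟩ := exists_chainPos_of_squareLevel_succ h
    exact ⟨fun hxy => by rw [hxy] at h; omega, i, p, q, by omega, hp, hq, hpq, hx, hy⟩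
  refine ⟨fun ⟨_, i, p, q, _, hp, hq, hpq, hu, hv⟩ => ?_,
    fun h => h.elim of_succ fun h => (of_succ h).symm⟩
  rw [hu, hv, squareLevel_chainPos hp, squareLevel_chainPos hq]
  omega

lemma cactusChain_isLayering (n : ℕ) :
    (cactusChain n 4 2).IsLayering fun v : Fin (n * 3 + 1) => squareLevel v where
  adj_iff _ _ := cactusChain_adj_iff
  exists_pred v hv := by
    obtain ⟨x, hx, h⟩ := exists_squareLevel_pred hv
    exact ⟨⟨x, by omega⟩, h⟩

lemma card_squareLevel_eq_two_mul {i : ℕ} (hi : i ≤ n) :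
    #{w : Fin (n * 3 + 1) | squareLevel w = 2 * i} = 1 := by
  rw [card_eq_one]
  refine ⟨⟨3 * i - 1, by omega⟩, ?_⟩
  ext w
  simp only [mem_filter, mem_univ, true_and, mem_singleton, Fin.ext_iff]
  unfold squareLevel; split <;> omega

lemma card_squareLevel_eq_two_mul_add_one {i : ℕ} (hi : i < n) :
    #{w : Fin (n * 3 + 1) | squareLevel w = 2 * i + 1} = 2 := by
  rw [card_eq_two]
  refine ⟨⟨3 * i + 1, by omega⟩, ⟨3 * i + 3, by omega⟩, by simp [Fin.ext_iff], ?_⟩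
  ext w
  simp only [mem_filter, mem_univ, true_and, mem_insert, mem_singleton, Fin.ext_iff]
  unfold squareLevel; split <;> omega

lemma card_squareLevel_eq_of_lt {ℓ : ℕ} (hℓ : 2 * n < ℓ) :
    #{w : Fin (n * 3 + 1) | squareLevel w = ℓ} = 0 := by
  rw [card_eq_zero, filter_eq_empty_iff]
  intro w _
  have := w.isLt
  unfold squareLevel; split_ifs <;> omega

lemma card_squareLevel_lt {ℓ : ℕ} (hℓ : ℓ ≤ 2 * n + 1) :
    #{w : Fin (n * 3 + 1) | squareLevel w < ℓ} = ℓ + ℓ / 2 := by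
  induction ℓ with
  | zero => simp
  | succ ℓ ih =>
    rw [card_filter_lt_add_one (fun w : Fin (n * 3 + 1) => squareLevel w), ih (by omega)]
    rcases Nat.even_or_odd' ℓ with ⟨i, rfl | rfl⟩
    · rw [card_squareLevel_eq_two_mul (by omega)]; omega
    · rw [card_squareLevel_eq_two_mul_add_one (by omega)]; omega

lemma mostar_cactusChain_four_two (n : ℕ) : mostar (cactusChain n 4 2) = 12 * (n ^ 2 / 2) := by
  have hL (v : Fin (n * 3 + 1)) : squareLevel v < 2 * n + 1 := by
    have := v.isLt; unfold squareLevel; split_ifs <;> omega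
  have hterm (ℓ : ℕ) (hℓ : ℓ < 2 * n) :
      #{w : Fin (n * 3 + 1) | squareLevel w = ℓ} *
        #{w : Fin (n * 3 + 1) | squareLevel w = ℓ + 1} *
        ((2 * (#{w : Fin (n * 3 + 1) | squareLevel w < ℓ} +
          #{w : Fin (n * 3 + 1) | squareLevel w = ℓ + 1}) : ℕ) -
            (Fintype.card (Fin (n * 3 + 1)) : ℤ)).natAbs =
        6 * ((2 * ((ℓ / 2 : ℕ) : ℤ) + 1) - n).natAbs := by
    rw [card_squareLevel_lt (by omega), Fintype.card_fin]
    rcases Nat.even_or_odd' ℓ with ⟨i, rfl | rfl⟩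
    · rw [card_squareLevel_eq_two_mul (by omega), card_squareLevel_eq_two_mul_add_one (by omega)]
      omega
    · rw [card_squareLevel_eq_two_mul_add_one (by omega),
        show 2 * i + 1 + 1 = 2 * (i + 1) by ring, card_squareLevel_eq_two_mul (by omega)]
      omega
  show mostar (cactusChain n 4 2 : SimpleGraph (Fin (n * 3 + 1))) = _
  rw [(cactusChain_isLayering n).mostar_eq hL, sum_range_succ,
    card_squareLevel_eq_of_lt (ℓ := 2 * n + 1) (by omega), mul_zero, zero_mul, add_zero,
    sum_congr rfl fun ℓ hℓ => hterm ℓ (mem_range.1 hℓ),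
    sum_range_two_mul_comp_div_two (fun i => 6 * ((2 * (i : ℤ) + 1) - n).natAbs), ← mul_sum,
    sum_range_natAbs_two_mul_add_one_sub]
  ring

theorem mostar_paraSquare_general (k : ℕ) :
    mostar (cactusChain (2 * k) 4 2) = 24 * k ^ 2 ∧
    mostar (cactusChain (2 * k + 1) 4 2) = 24 * k ^ 2 + 24 * k := by
  simp only [mostar_cactusChain_four_two]
  constructor <;> ring_nf <;> omega

theorem mostar_paraSquare (k : ℕ) (hk : 1 ≤ k) :
    mostar (cactusChain (2 * k) 4 2) = 24 * k ^ 2 ∧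
    mostar (cactusChain (2 * k + 1) 4 2) = 24 * k ^ 2 + 24 * k :=
  mostar_paraSquare_general k
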